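/- The packing density of the permutation 215634 is at least 6!/(9³·2³) = 10/81. -/

import Mathlib

open Filter Real

/-- Number of occurrences of the pattern `S` in the permutation `P`:
an occurrence is a strictly increasing choice of positions whose entries
appear in the same relative order as `S`. -/
def numOcc {m n : ℕ} (S : Equiv.Perm (Fin m)) (P : Equiv.Perm (Fin n)) : ℕ :=
  (Finset.univ.filter
    (fun f : Fin m → Fin n =>
      (∀ i j : Fin m, i < j → f i < f j) ∧
      (∀ i j : Fin m, S i < S j ↔ P (f i) < P (f j)))).card

/-- The pattern density `p(S,P)`: the number of occurrences of `S` in `P`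
divided by `C(n,m)` (this is `0` when `n < m`, since then `C(n,m) = 0`
and there are no occurrences). -/
noncomputable def patternDensity {m n : ℕ} (S : Equiv.Perm (Fin m)) (P : Equiv.Perm (Fin n)) : ℝ :=
  (numOcc S P : ℝ) / (n.choose m : ℝ)

/-- `p(S,n)`: the maximum of `p(S,P)` over all permutations `P` of length `n`. -/
noncomputable def maxDensity {m : ℕ} (S : Equiv.Perm (Fin m)) (n : ℕ) : ℝ :=
  ⨆ P : Equiv.Perm (Fin n), patternDensity S P

/-- `P` avoids the pattern `T` if `P` has no occurrence of `T`. -/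
def avoids {k n : ℕ} (T : Equiv.Perm (Fin k)) (P : Equiv.Perm (Fin n)) : Prop :=
  numOcc T P = 0

/-- `p(S,n;T)`: the maximum of `p(S,P)` over all `T`-avoiding permutations `P` of length `n`. -/
noncomputable def maxDensityAvoiding {m k : ℕ} (S : Equiv.Perm (Fin m)) (T : Equiv.Perm (Fin k))
    (n : ℕ) : ℝ :=
  sSup {x : ℝ | ∃ P : Equiv.Perm (Fin n), avoids T P ∧ x = patternDensity S P}

/-- The permutation 215634 (0-indexed one-line notation). -/
def perm215634 : Equiv.Perm (Fin 6) :=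
  ⟨![1,0,4,5,2,3], ![1,0,4,5,2,3], by intro x; fin_cases x <;> rfl, by intro x; fin_cases x <;> rfl⟩

/-! ### Auxiliary material -/

/-- The occurrence set whose cardinality is `numOcc`. -/
def occSet {m n : ℕ} (S : Equiv.Perm (Fin m)) (P : Equiv.Perm (Fin n)) :
    Finset (Fin m → Fin n) :=
  Finset.univ.filter
    (fun f : Fin m → Fin n =>
      (∀ i j : Fin m, i < j → f i < f j) ∧
      (∀ i j : Fin m, S i < S j ↔ P (f i) < P (f j)))

lemma numOcc_eq_card_occSet {m n : ℕ} (S : Equiv.Perm (Fin m)) (P : Equiv.Perm (Fin n)) :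
    numOcc S P = (occSet S P).card := rfl

lemma patternDensity_nonneg {m n : ℕ} (S : Equiv.Perm (Fin m)) (P : Equiv.Perm (Fin n)) :
    0 ≤ patternDensity S P := by
  unfold patternDensity; positivity

lemma patternDensity_le_maxDensity {m n : ℕ} (S : Equiv.Perm (Fin m)) (P : Equiv.Perm (Fin n)) :
    patternDensity S P ≤ maxDensity S n :=
  le_ciSup (Set.Finite.bddAbove (Set.finite_range _)) P

lemma maxDensity_nonneg {m : ℕ} (S : Equiv.Perm (Fin m)) (n : ℕ) : 0 ≤ maxDensity S n :=
  le_trans (patternDensity_nonneg S (1 : Equiv.Perm (Fin n))) (patternDensity_le_maxDensity S 1)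

/-- Deletion of the point at position `d` from a permutation. -/
def delPerm {n : ℕ} (P : Equiv.Perm (Fin (n+1))) (d : Fin (n+1)) : Equiv.Perm (Fin n) :=
  ((finSuccAboveEquiv d).trans
    ((Equiv.subtypeEquiv P (fun a => not_congr ⟨fun h => by rw [h], fun h => P.injective h⟩)).trans
      (finSuccAboveEquiv (P d)).symm))

lemma delPerm_apply {n : ℕ} (P : Equiv.Perm (Fin (n+1))) (d : Fin (n+1)) (g : Fin n) :
    (P d).succAbove (delPerm P d g) = P (d.succAbove g) := by
  have h : delPerm P d g =
      (finSuccAboveEquiv (P d)).symm ⟨P (d.succAbove g), by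
        simp [P.injective.ne_iff, Fin.succAbove_ne]⟩ := rfl
  rw [h]
  have := (finSuccAboveEquiv (P d)).apply_symm_apply ⟨P (d.succAbove g), by
        simp [P.injective.ne_iff, Fin.succAbove_ne]⟩
  rw [finSuccAboveEquiv_apply] at this
  exact congrArg Subtype.val this

lemma delPerm_lt_iff {n : ℕ} (P : Equiv.Perm (Fin (n+1))) (d : Fin (n+1)) (a b : Fin n) :
    delPerm P d a < delPerm P d b ↔ P (d.succAbove a) < P (d.succAbove b) := by
  rw [← Fin.succAbove_lt_succAbove_iff (p := P d), delPerm_apply, delPerm_apply]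

lemma avoid_card_le {m n : ℕ} (S : Equiv.Perm (Fin m)) (P : Equiv.Perm (Fin (n+1)))
    (d : Fin (n+1)) :
    ((occSet S P).filter (fun f => ∀ i, f i ≠ d)).card ≤ numOcc S (delPerm P d) := by
  apply Finset.card_le_card_of_surjOn (fun g i => d.succAbove (g i))
  intro f hf
  simp only [Finset.coe_filter, Set.mem_setOf_eq, Finset.mem_filter, occSet, Finset.mem_univ,
    true_and] at hf
  obtain ⟨⟨h1, h2⟩, h3⟩ := hf
  set g : Fin m → Fin n := fun i => (finSuccAboveEquiv d).symm ⟨f i, h3 i⟩ with hg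
  have hgf : ∀ i, d.succAbove (g i) = f i := by
    intro i
    have := (finSuccAboveEquiv d).apply_symm_apply ⟨f i, h3 i⟩
    rw [finSuccAboveEquiv_apply] at this
    exact congrArg Subtype.val this
  refine ⟨g, ?_, ?_⟩
  · simp only [Finset.mem_coe, occSet, numOcc, Finset.mem_filter, Finset.mem_univ, true_and]
    constructor
    · intro i j hij
      rw [← Fin.succAbove_lt_succAbove_iff (p := d), hgf, hgf]
      exact h1 i j hij
    · intro i j
      rw [delPerm_lt_iff, hgf, hgf]
      exact h2 i j
  · funext i; exact hgf i

lemma double_count {m n : ℕ} (S : Equiv.Perm (Fin m)) (P : Equiv.Perm (Fin (n+1))) :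
    numOcc S P * (n + 1 - m) =
      ∑ d : Fin (n+1), ((occSet S P).filter (fun f => ∀ i, f i ≠ d)).card := by
  have : ∀ d : Fin (n+1), ((occSet S P).filter (fun f => ∀ i, f i ≠ d)).card
      = ∑ f ∈ occSet S P, if (∀ i, f i ≠ d) then 1 else 0 := by
    intro d; rw [Finset.card_filter]
  simp_rw [this]
  rw [Finset.sum_comm]
  rw [numOcc_eq_card_occSet, Finset.card_eq_sum_ones (occSet S P), Finset.sum_mul, one_mul]
  apply Finset.sum_congr rfl
  intro f hf
  have hinj : Function.Injective f := by
    simp only [occSet, Finset.mem_filter] at hf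
    have h1 := hf.2.1
    intro a b hab
    by_contra hne
    rcases lt_or_gt_of_ne hne with h | h
    · exact absurd hab (ne_of_lt (h1 a b h))
    · exact absurd hab.symm (ne_of_lt (h1 b a h))
  have hcof : ∑ d : Fin (n+1), (if (∀ i, f i ≠ d) then 1 else 0)
      = (Finset.univ.filter (fun d : Fin (n+1) => ∀ i, f i ≠ d)).card := by
    rw [Finset.card_filter]
  rw [hcof]
  have h2 : Finset.univ.filter (fun d : Fin (n+1) => ∀ i, f i ≠ d)
      = Finset.univ \ Finset.image f Finset.univ := by
    ext d
    simp [eq_comm]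
  rw [h2, Finset.card_sdiff_of_subset (Finset.subset_univ _), Finset.card_image_of_injective _ hinj]
  simp

lemma maxDensity_succ_le {m n : ℕ} (S : Equiv.Perm (Fin m)) (hn : m ≤ n) :
    maxDensity S (n+1) ≤ maxDensity S n := by
  apply ciSup_le
  intro P
  set M := maxDensity S n with hMdef
  have hM : 0 ≤ M := maxDensity_nonneg S n
  have hbound : ∀ d : Fin (n+1), (numOcc S (delPerm P d) : ℝ) ≤ M * (n.choose m : ℕ) := by
    intro d
    have h1 : patternDensity S (delPerm P d) ≤ M := patternDensity_le_maxDensity S _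
    have hpos : (0:ℝ) < ((n.choose m : ℕ) : ℝ) := by exact_mod_cast Nat.choose_pos hn
    rw [patternDensity, div_le_iff₀ hpos] at h1
    linarith
  have key : (numOcc S P : ℝ) * (((n + 1 - m : ℕ)) : ℝ)
      ≤ ((n+1 : ℕ) : ℝ) * (M * ((n.choose m : ℕ) : ℝ)) := by
    have h2 : (numOcc S P * (n + 1 - m) : ℕ) ≤ ∑ d : Fin (n+1), numOcc S (delPerm P d) := by
      rw [double_count S P]
      exact Finset.sum_le_sum (fun d _ => avoid_card_le S P d)
    have h3 : ((∑ d : Fin (n+1), numOcc S (delPerm P d) : ℕ) : ℝ)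
        ≤ ((n+1 : ℕ) : ℝ) * (M * ((n.choose m : ℕ) : ℝ)) := by
      have hsum : (∑ d : Fin (n+1), (numOcc S (delPerm P d) : ℝ))
          ≤ ∑ _d : Fin (n+1), M * ((n.choose m : ℕ) : ℝ) :=
        Finset.sum_le_sum (fun d _ => hbound d)
      rw [Finset.sum_const, Finset.card_univ, Fintype.card_fin, nsmul_eq_mul] at hsum
      push_cast
      push_cast at hsum
      linarith [hsum]
    calc (numOcc S P : ℝ) * (((n + 1 - m : ℕ)) : ℝ)
        = ((numOcc S P * (n + 1 - m) : ℕ) : ℝ) := by push_cast; ring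
      _ ≤ ((∑ d : Fin (n+1), numOcc S (delPerm P d) : ℕ) : ℝ) := by exact_mod_cast h2
      _ ≤ _ := h3
  have hpos : (0:ℝ) < (((n+1).choose m : ℕ) : ℝ) := by
    exact_mod_cast Nat.choose_pos (le_trans hn (Nat.le_succ n))
  rw [patternDensity, div_le_iff₀ hpos]
  have hsub : (0:ℝ) < (((n + 1 - m : ℕ)) : ℝ) := by
    have : 0 < n + 1 - m := by omega
    exact_mod_cast this
  have hid : ((n.choose m : ℕ) : ℝ) * ((n+1 : ℕ) : ℝ)
      = (((n+1).choose m : ℕ) : ℝ) * (((n + 1 - m : ℕ)) : ℝ) := by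
    exact_mod_cast congrArg (Nat.cast : ℕ → ℝ) (Nat.choose_mul_succ_eq n m)
  nlinarith [key, hid, hsub, hM, hpos]

/-! ### The extremal construction: three blocks -/

def bnat (k x : ℕ) : ℕ := if x < k then k - 1 - x else if x < 2*k then x + k else x - k

lemma bnat_lt (k x : ℕ) (h : x < 3*k) : bnat k x < 3*k := by
  unfold bnat; split_ifs <;> omega

lemma bnat_invol (k x : ℕ) (h : x < 3*k) : bnat k (bnat k x) = x := by
  unfold bnat; split_ifs <;> omega

/-- The permutation of `Fin (3k)` given in block form by `132[δ_k, ι_k, ι_k]`: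
a decreasing block of the `k` lowest values, then an increasing block of the
`k` highest values, then an increasing block of the `k` middle values. -/
def blockPerm (k : ℕ) : Equiv.Perm (Fin (3*k)) :=
  Function.Involutive.toPerm (fun i => ⟨bnat k i.1, bnat_lt k i.1 i.2⟩)
    (fun i => by ext; exact bnat_invol k i.1 i.2)

lemma blockPerm_val (k : ℕ) (i : Fin (3*k)) : (blockPerm k i : ℕ) = bnat k i.1 := rfl

abbrev Dom (k : ℕ) := (Fin k × Fin k) × (Fin k × Fin k) × (Fin k × Fin k)

/-- Position values of the chosen 6 points. -/
def pnat (k : ℕ) (x : Dom k) (v : ℕ) : ℕ :=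
  if v = 0 then x.1.1 else if v = 1 then x.1.2 else if v = 2 then k + x.2.1.1
    else if v = 3 then k + x.2.1.2 else if v = 4 then 2*k + x.2.2.1 else 2*k + x.2.2.2

lemma pnat_lt (k : ℕ) (x : Dom k) (v : ℕ) (_hv : v < 6) : pnat k x v < 3*k := by
  have h1 := x.1.1.2; have h2 := x.1.2.2; have h3 := x.2.1.1.2; have h4 := x.2.1.2.2
  have h5 := x.2.2.1.2; have h6 := x.2.2.2.2
  unfold pnat; split_ifs <;> omega

def φk (k : ℕ) (x : Dom k) : Fin 6 → Fin (3*k) :=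
  fun i => ⟨pnat k x i.1, pnat_lt k x i.1 i.2⟩

/-- One-line values of 215634 as a function on ℕ. -/
def sv (v : ℕ) : ℕ :=
  if v = 0 then 1 else if v = 1 then 0 else if v = 2 then 4 else if v = 3 then 5
    else if v = 4 then 2 else 3

lemma sv_spec : ∀ i j : Fin 6, (perm215634 i < perm215634 j ↔ sv i.1 < sv j.1) := by decide

lemma card_pairs (k : ℕ) :
    ((Finset.univ : Finset (Fin k × Fin k)).filter (fun p => p.1 < p.2)).card = k.choose 2 := by
  rw [Finset.card_filter, Fintype.sum_prod_type, Finset.sum_comm]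
  have h1 : ∀ b : Fin k, (∑ a : Fin k, if a < b then 1 else 0) = (b : ℕ) := by
    intro b
    rw [← Finset.card_filter]
    have : Finset.univ.filter (fun a : Fin k => a < b) = Finset.Iio b := by
      ext a; simp
    rw [this, Fin.card_Iio]
  simp_rw [h1]
  rw [Fin.sum_univ_eq_sum_range (fun i => i) k, Finset.sum_range_id, Nat.choose_two_right]

set_option maxHeartbeats 2000000 in
lemma choose_cube_le_numOcc (k : ℕ) :
    (k.choose 2)^3 ≤ numOcc perm215634 (blockPerm k) := by
  classical
  set D : Finset (Dom k) := Finset.univ.filter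
    (fun x : Dom k => x.1.1 < x.1.2 ∧ x.2.1.1 < x.2.1.2 ∧ x.2.2.1 < x.2.2.2) with hDdef
  have hDcard : D.card = (k.choose 2)^3 := by
    have hsplit : D = (Finset.univ.filter (fun p : Fin k × Fin k => p.1 < p.2)) ×ˢ
        ((Finset.univ.filter (fun p : Fin k × Fin k => p.1 < p.2)) ×ˢ
          (Finset.univ.filter (fun p : Fin k × Fin k => p.1 < p.2))) := by
      ext x
      simp only [hDdef, Finset.mem_filter, Finset.mem_univ, true_and, Finset.mem_product]
    rw [hsplit, Finset.card_product, Finset.card_product, card_pairs]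
    ring
  rw [← hDcard, numOcc]
  apply Finset.card_le_card_of_injOn (φk k)
  · intro x hx
    have hx' : x ∈ D := hx
    rw [hDdef, Finset.mem_filter] at hx'
    obtain ⟨-, hab, hcd, heg⟩ := hx'
    rw [Fin.lt_def] at hab hcd heg
    have h1 := x.1.1.2; have h2 := x.1.2.2; have h3 := x.2.1.1.2; have h4 := x.2.1.2.2
    have h5 := x.2.2.1.2; have h6 := x.2.2.2.2
    simp only [Finset.mem_coe, Finset.mem_filter, Finset.mem_univ, true_and]
    constructor
    · intro i j hij
      rw [Fin.lt_def] at hij ⊢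
      show pnat k x i.1 < pnat k x j.1
      have hi := i.2; have hj := j.2
      unfold pnat; split_ifs <;> omega
    · intro i j
      rw [sv_spec i j, Fin.lt_def, blockPerm_val, blockPerm_val]
      show sv i.1 < sv j.1 ↔ bnat k (pnat k x i.1) < bnat k (pnat k x j.1)
      obtain ⟨u, hu⟩ := i; obtain ⟨v, hv⟩ := j
      show sv u < sv v ↔ bnat k (pnat k x u) < bnat k (pnat k x v)
      interval_cases u <;> interval_cases v <;>
        norm_num [sv, pnat] <;> (unfold bnat; split_ifs <;> omega)
  · intro x hx y hy hxy
    have H : ∀ v : Fin 6, pnat k x v.1 = pnat k y v.1 := by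
      intro v
      have := congrFun hxy v
      simpa [φk, Fin.ext_iff] using this
    have e0 := H ⟨0, by norm_num⟩; have e1 := H ⟨1, by norm_num⟩; have e2 := H ⟨2, by norm_num⟩
    have e3 := H ⟨3, by norm_num⟩; have e4 := H ⟨4, by norm_num⟩; have e5 := H ⟨5, by norm_num⟩
    simp only [pnat] at e0 e1 e2 e3 e4 e5
    norm_num at e0 e1 e2 e3 e4 e5
    obtain ⟨⟨a, b⟩, ⟨c, d⟩, e, g⟩ := x
    obtain ⟨⟨a', b'⟩, ⟨c', d'⟩, e', g'⟩ := y
    simp only [Prod.mk.injEq, Fin.ext_iff]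
    simp only at e0 e1 e2 e3 e4 e5
    omega

/-! ### The limit computation -/

lemma choose6_cast (n : ℕ) (hn : 6 ≤ n) :
    ((n.choose 6 : ℕ) : ℝ)
      = (n:ℝ) * ((n:ℝ)-1) * ((n:ℝ)-2) * ((n:ℝ)-3) * ((n:ℝ)-4) * ((n:ℝ)-5) / 720 := by
  have h1 : n.descFactorial 6 = 720 * n.choose 6 := by
    rw [Nat.descFactorial_eq_factorial_mul_choose]; norm_num [Nat.factorial]
  have h2 : n.descFactorial 6 = (n-5) * ((n-4) * ((n-3) * ((n-2) * ((n-1) * n)))) := by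
    simp [Nat.descFactorial]
  have h3 : (720 : ℝ) * (n.choose 6 : ℝ)
      = ((n:ℝ)-5) * (((n:ℝ)-4) * (((n:ℝ)-3) * (((n:ℝ)-2) * (((n:ℝ)-1) * (n:ℝ))))) := by
    have := congrArg (fun t : ℕ => (t : ℝ)) (h1.symm.trans h2)
    push_cast [Nat.cast_sub (by omega : 5 ≤ n), Nat.cast_sub (by omega : 4 ≤ n),
      Nat.cast_sub (by omega : 3 ≤ n), Nat.cast_sub (by omega : 2 ≤ n),
      Nat.cast_sub (by omega : 1 ≤ n)] at this
    linarith
  field_simp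
  linarith [h3]

lemma dk_tendsto :
    Tendsto (fun k : ℕ => ((k.choose 2 : ℕ) : ℝ)^3 / (((3*k).choose 6 : ℕ) : ℝ))
      atTop (nhds (10/81)) := by
  have h0 : Tendsto (fun k : ℕ => 1/(k:ℝ)) atTop (nhds 0) := tendsto_one_div_atTop_nhds_zero_nat
  have hc : ∀ c : ℝ, Tendsto (fun k : ℕ => c/(k:ℝ)) atTop (nhds 0) :=
    fun c => tendsto_const_div_atTop_nhds_zero_nat c
  have hnum : Tendsto (fun k : ℕ => 90 * (1 - 1/(k:ℝ))^3) atTop (nhds (90 * (1 - 0)^3)) :=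
    (((tendsto_const_nhds.sub h0).pow 3).const_mul 90)
  have hden : Tendsto (fun k : ℕ =>
      (3 - 1/(k:ℝ)) * (3 - 2/(k:ℝ)) * (3 - 3/(k:ℝ)) * (3 - 4/(k:ℝ)) * (3 - 5/(k:ℝ)) * 3)
      atTop (nhds ((3 - 0) * (3 - 0) * (3 - 0) * (3 - 0) * (3 - 0) * 3)) :=
    (((((tendsto_const_nhds.sub (hc 1)).mul (tendsto_const_nhds.sub (hc 2))).mul
      (tendsto_const_nhds.sub (hc 3))).mul (tendsto_const_nhds.sub (hc 4))).mul
      (tendsto_const_nhds.sub (hc 5))).mul_const 3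
  have hlim := hnum.div hden (by norm_num)
  have hval : (90 * (1 - 0)^3) / ((3 - (0:ℝ)) * (3 - 0) * (3 - 0) * (3 - 0) * (3 - 0) * 3)
      = 10/81 := by norm_num
  rw [hval] at hlim
  apply hlim.congr'
  filter_upwards [eventually_ge_atTop 2] with k hk
  have hK : (0:ℝ) < (k:ℝ) := by exact_mod_cast (by omega : 0 < k)
  have hK0 : (k:ℝ) ≠ 0 := ne_of_gt hK
  have h2 : ((k.choose 2 : ℕ) : ℝ) = (k:ℝ) * ((k:ℝ) - 1) / 2 := Nat.cast_choose_two (K := ℝ) k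
  have h6 : (((3*k).choose 6 : ℕ) : ℝ)
      = (3*(k:ℝ)) * (3*(k:ℝ)-1) * (3*(k:ℝ)-2) * (3*(k:ℝ)-3) * (3*(k:ℝ)-4) * (3*(k:ℝ)-5) / 720 := by
    have := choose6_cast (3*k) (by omega)
    push_cast at this
    convert this using 2 <;> ring
  rw [Pi.div_apply]
  rw [h2, h6]
  have hk2 : (2:ℝ) ≤ (k:ℝ) := by exact_mod_cast hk
  have p1 : (3*(k:ℝ)-1) ≠ 0 := by nlinarith
  have p2 : (3*(k:ℝ)-2) ≠ 0 := by nlinarith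
  have p3 : (3*(k:ℝ)-3) ≠ 0 := by nlinarith
  have p4 : (3*(k:ℝ)-4) ≠ 0 := by nlinarith
  have p5 : (3*(k:ℝ)-5) ≠ 0 := by nlinarith
  field_simp
  ring

/-! ### Main theorem -/

/-- p(215634) ≥ 6!/(9³·2³) = 10/81. -/
theorem stmt_19 :
    ∃ L : ℝ, Tendsto (fun n => maxDensity perm215634 n) atTop (nhds L) ∧
      (10 / 81 : ℝ) ≤ L := by
  set S := perm215634 with hS
  -- convergence
  have hanti : Antitone (fun j : ℕ => maxDensity S (j + 6)) := by
    apply antitone_nat_of_succ_le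
    intro j
    exact maxDensity_succ_le S (by omega : 6 ≤ j + 6)
  have hbdd : BddBelow (Set.range (fun j : ℕ => maxDensity S (j + 6))) := by
    refine ⟨0, ?_⟩
    rintro x ⟨j, rfl⟩
    exact maxDensity_nonneg S _
  set L : ℝ := ⨅ j : ℕ, maxDensity S (j + 6) with hL
  have hT6 : Tendsto (fun j : ℕ => maxDensity S (j + 6)) atTop (nhds L) :=
    tendsto_atTop_ciInf hanti hbdd
  have hT : Tendsto (fun n : ℕ => maxDensity S n) atTop (nhds L) :=
    (tendsto_add_atTop_iff_nat 6).1 hT6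
  refine ⟨L, hT, ?_⟩
  -- lower bound via the subsequence of the construction
  have hsub : Tendsto (fun k : ℕ => maxDensity S (3 * k)) atTop (nhds L) :=
    hT.comp (tendsto_atTop_mono (fun k => by simp only [id_eq]; omega) tendsto_id)
  have hle : ∀ k : ℕ, ((k.choose 2 : ℕ) : ℝ)^3 / (((3*k).choose 6 : ℕ) : ℝ)
      ≤ maxDensity S (3 * k) := by
    intro k
    have h1 : ((k.choose 2 : ℕ) : ℝ)^3 ≤ (numOcc S (blockPerm k) : ℝ) := by
      have := choose_cube_le_numOcc k
      calc ((k.choose 2 : ℕ) : ℝ)^3 = (((k.choose 2)^3 : ℕ) : ℝ) := by push_cast; ring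
        _ ≤ _ := by exact_mod_cast this
    have h2 : ((k.choose 2 : ℕ) : ℝ)^3 / (((3*k).choose 6 : ℕ) : ℝ)
        ≤ patternDensity S (blockPerm k) := by
      rw [patternDensity]
      rcases eq_or_lt_of_le (Nat.zero_le ((3*k).choose 6)) with h | h
      · rw [← h]
        norm_num
      · have hc : (0:ℝ) < (((3*k).choose 6 : ℕ) : ℝ) := by exact_mod_cast h
        exact (div_le_div_iff_of_pos_right hc).mpr h1
    exact le_trans h2 (patternDensity_le_maxDensity S (blockPerm k))
  exact le_of_tendsto_of_tendsto' dk_tendsto hsub hle
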